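/- For t ≥ 5, the equitable dominator chromatic number of the complement of the helm graph H_{1,t,t} equals t + 1. -/

import Mathlib

open SimpleGraph Finset

/-- A coloring `c` of the vertices of `G` with exactly `k` colors is an
*equitable dominator coloring* if it is proper, every vertex dominates some
color class (every vertex of that class lies in its closed neighborhood),
and any two color classes differ in size by at most one. -/
def IsEquitableDominatorColoring {V : Type*} [Fintype V] (G : SimpleGraph V)
    (k : ℕ) (c : V → Fin k) : Prop :=
  Function.Surjective c ∧
  (∀ ⦃u v : V⦄, G.Adj u v → c u ≠ c v) ∧
  (∀ v : V, ∃ i : Fin k, ∀ u : V, c u = i → u = v ∨ G.Adj v u) ∧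
  (∀ i j : Fin k,
    (Finset.univ.filter fun v => c v = i).card ≤
      (Finset.univ.filter fun v => c v = j).card + 1)

/-- The equitable dominator chromatic number `χ_ed`. -/
noncomputable def edChromaticNumber {V : Type*} [Fintype V] (G : SimpleGraph V) : ℕ :=
  sInf {k | ∃ c : V → Fin k, IsEquitableDominatorColoring G k c}

/-- The wheel `W_{1,t}`: a cycle on `t` vertices together with a hub (`none`)
adjacent to all cycle vertices. -/
def wheel (t : ℕ) : SimpleGraph (Option (Fin t)) :=
  SimpleGraph.fromRel (fun x y =>
    x = none ∨ y = none ∨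
    (∃ i j : Fin t, x = some i ∧ y = some j ∧ (SimpleGraph.cycleGraph t).Adj i j))

/-- The helm `H_{1,t,t}`: the wheel `W_{1,t}` together with a pendant vertex
attached to each of the `t` cycle vertices. -/
def helm (t : ℕ) : SimpleGraph (Option (Fin t) ⊕ Fin t) :=
  SimpleGraph.fromRel (fun x y =>
    (∃ u v : Option (Fin t), x = Sum.inl u ∧ y = Sum.inl v ∧ (wheel t).Adj u v) ∨
    (∃ i : Fin t, x = Sum.inl (some i) ∧ y = Sum.inr i))

/-!
The hub and the pendants are independent in the helm, hence form a clique of size `t + 1`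
in its complement, so every proper coloring uses at least `t + 1` colors. Conversely, give
the hub a color of its own and let each rim vertex share its color with its pendant: the
classes have sizes 1 and 2, the hub and each pendant dominate the hub's class, and rim
vertex `i` dominates the class of `i + 2`, none of whose members is a helm neighbor of `i`
once `t ≥ 4`.
-/

lemma SimpleGraph.eq_or_compl_adj_iff {V : Type*} {G : SimpleGraph V} {u v : V} :
    u = v ∨ Gᶜ.Adj v u ↔ u = v ∨ ¬ G.Adj v u := by
  by_cases h : u = v <;> simp [h, compl_adj, Ne.symm]

section EquitableDominator

variable {V : Type*} [Fintype V] {G : SimpleGraph V}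

lemma IsEquitableDominatorColoring.card_le_of_pairwise_adj {k : ℕ} {c : V → Fin k}
    (hc : IsEquitableDominatorColoring G k c) {ι : Type*} (f : ι → V)
    (hf : Pairwise fun i j => G.Adj (f i) (f j)) : Nat.card ι ≤ k :=
  Colorable.card_le_of_pairwise_adj ⟨Coloring.mk c fun h => hc.2.1 h⟩ f hf

lemma edChromaticNumber_eq_of_isEquitableDominatorColoring {k : ℕ} {c : V → Fin k}
    (hc : IsEquitableDominatorColoring G k c)
    (hle : ∀ k' (c' : V → Fin k'), IsEquitableDominatorColoring G k' c' → k ≤ k') :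
    edChromaticNumber G = k :=
  le_antisymm (Nat.sInf_le ⟨c, hc⟩) (le_csInf ⟨k, c, hc⟩ fun _ ⟨c', hc'⟩ => hle _ c' hc')

end EquitableDominator

lemma Fin.two_ne_zero_of_three_le {n : ℕ} [NeZero n] (hn : 3 ≤ n) : (2 : Fin n) ≠ 0 := by
  simp [Fin.ext_iff, Nat.mod_eq_of_lt (show 2 < n by omega)]

lemma Fin.self_ne_add_two {n : ℕ} [NeZero n] (hn : 3 ≤ n) (i : Fin n) : i ≠ i + 2 := by
  rw [ne_eq, left_eq_add]
  exact Fin.two_ne_zero_of_three_le hn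

lemma cycleGraph_not_adj_add_two {n : ℕ} [NeZero n] (hn : 4 ≤ n) (i : Fin n) :
    ¬ (cycleGraph n).Adj i (i + 2) := by
  rw [cycleGraph_adj', add_sub_cancel_left, sub_add_cancel_left]
  simp [Fin.val_neg, Fin.two_ne_zero_of_three_le (by omega : 3 ≤ n),
    Nat.mod_eq_of_lt (show 2 < n by omega)]
  omega

section Helm

variable (t : ℕ)

lemma helm_adj_some_some (i j : Fin t) :
    (helm t).Adj (.inl (some i)) (.inl (some j)) ↔ (cycleGraph t).Adj i j := by
  simp only [helm, wheel, fromRel_adj]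
  constructor
  · rintro ⟨-, h | h⟩ <;> simp_all [adj_comm]
  · intro h
    simp [h, h.ne]

lemma helm_adj_some_inr (i j : Fin t) : (helm t).Adj (.inl (some i)) (.inr j) ↔ i = j := by
  simp [helm, fromRel_adj, eq_comm]

lemma helm_not_adj_none_inr (i : Fin t) : ¬ (helm t).Adj (.inl none) (.inr i) := by
  simp [helm, fromRel_adj]

lemma helm_not_adj_inr_inr (i j : Fin t) : ¬ (helm t).Adj (.inr i) (.inr j) := by
  simp [helm, fromRel_adj]

end Helm

def helmColoring (t : ℕ) : Option (Fin t) ⊕ Fin t → Fin (t + 1)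
  | .inl none => Fin.last t
  | .inl (some i) | .inr i => i.castSucc

section HelmColoring

variable (t : ℕ)

lemma helmColoring_surjective : Function.Surjective (helmColoring t) := by
  intro i
  induction i using Fin.lastCases with
  | last => exact ⟨.inl none, rfl⟩
  | cast j => exact ⟨.inr j, rfl⟩

lemma eq_or_helm_adj_of_helmColoring_eq {u v : Option (Fin t) ⊕ Fin t}
    (h : helmColoring t u = helmColoring t v) : u = v ∨ (helm t).Adj u v := by
  rcases u with (_ | i) | i <;> rcases v with (_ | j) | j <;>
    simp_all [helmColoring, helm_adj_some_inr, (helm t).adj_comm (.inr _),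
      (Fin.castSucc_lt_last _).ne']

lemma card_fiber_helmColoring (i : Fin (t + 1)) :
    1 ≤ #{v | helmColoring t v = i} ∧ #{v | helmColoring t v = i} ≤ 2 := by
  induction i using Fin.lastCases with
  | last =>
    have : #{v | helmColoring t v = Fin.last t} = 1 := by
      refine Finset.card_eq_one.2 ⟨.inl none, ?_⟩
      ext ((_ | j) | j) <;> simp only [Finset.mem_filter, Finset.mem_univ, true_and] <;>
        simp [helmColoring]
    omega
  | cast j =>
    have : #{v | helmColoring t v = j.castSucc} = 2 := by
      refine Finset.card_eq_two.2 ⟨.inl (some j), .inr j, by simp, ?_⟩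
      ext ((_ | k) | k) <;> simp [helmColoring, eq_comm]
    omega

lemma exists_helmColoring_fiber_not_adj (ht : 4 ≤ t) (v : Option (Fin t) ⊕ Fin t) :
    ∃ i, ∀ u, helmColoring t u = i → u = v ∨ ¬ (helm t).Adj v u := by
  have : NeZero t := ⟨by omega⟩
  rcases v with (_ | i) | i
  · refine ⟨Fin.last t, ?_⟩
    rintro ((_ | j) | j) hu <;> simp_all [helmColoring, (Fin.castSucc_lt_last _).ne]
  · refine ⟨(i + 2).castSucc, ?_⟩
    rintro ((_ | j) | j) hu <;> simp only [helmColoring, Fin.castSucc_inj] at hu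
    · simp [(Fin.castSucc_lt_last _).ne'] at hu
    · simp [hu, helm_adj_some_some, cycleGraph_not_adj_add_two ht]
    · simp [hu, helm_adj_some_inr, Fin.self_ne_add_two (by omega : 3 ≤ t)]
  · refine ⟨Fin.last t, ?_⟩
    rintro ((_ | j) | j) hu <;>
      simp_all [helmColoring, (Fin.castSucc_lt_last _).ne, (helm t).adj_comm (.inr _),
        helm_not_adj_none_inr]

end HelmColoring

def hubOrPendant (t : ℕ) : Option (Fin t) → Option (Fin t) ⊕ Fin t
  | none => .inl none
  | some i => .inr i

lemma pairwise_compl_helm_adj_hubOrPendant (t : ℕ) :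
    Pairwise fun a b => (helm t)ᶜ.Adj (hubOrPendant t a) (hubOrPendant t b) := by
  rintro (_ | i) (_ | j) hne
  · exact absurd rfl hne
  · exact ⟨by simp [hubOrPendant], helm_not_adj_none_inr t j⟩
  · exact ⟨by simp [hubOrPendant], fun h => helm_not_adj_none_inr t i h.symm⟩
  · exact ⟨by simpa [hubOrPendant] using hne, helm_not_adj_inr_inr t i j⟩

lemma isEquitableDominatorColoring_helmColoring {t : ℕ} (ht : 4 ≤ t) :
    IsEquitableDominatorColoring (helm t)ᶜ (t + 1) (helmColoring t) := by
  refine ⟨helmColoring_surjective t, ?_, ?_, ?_⟩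
  · rintro u v ⟨hne, hnadj⟩ hcol
    exact (eq_or_helm_adj_of_helmColoring_eq t hcol).elim hne hnadj
  · intro v
    simpa only [eq_or_compl_adj_iff] using exists_helmColoring_fiber_not_adj t ht v
  · intro i j
    have := card_fiber_helmColoring t i
    have := card_fiber_helmColoring t j
    omega

theorem edChromaticNumber_compl_helm (t : ℕ) (ht : 5 ≤ t) :
    edChromaticNumber (helm t)ᶜ = t + 1 := by
  refine edChromaticNumber_eq_of_isEquitableDominatorColoring
    (isEquitableDominatorColoring_helmColoring (by omega)) fun k c hc => ?_
  simpa using hc.card_le_of_pairwise_adj _ (pairwise_compl_helm_adj_hubOrPendant t)
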